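/- There exists a constant C > 0 such that for every integer N ≥ 2 and every t ∈ [0, 1]: | σ_N(t) − (t/(4π))·log N | ≤ C, where σ_N(t) = (1/(4π²)) ∑_{n∈ℤ²} χ_N(n)² · [ t/(2⟨n⟩²) − sin(2t⟨n⟩)/(4⟨n⟩³) ]. -/

import Mathlib

open scoped Real

/-- Euclidean norm on `ℝ²`. -/
noncomputable def enorm2 (x : ℝ × ℝ) : ℝ := Real.sqrt (x.1 ^ 2 + x.2 ^ 2)

/-- The time-dependent variance of the truncated stochastic convolution:
`σ_N(t) = (1/(4π²)) ∑_{n∈ℤ²} χ(n/N)² [ t/(2⟨n⟩²) − sin(2t⟨n⟩)/(4⟨n⟩³) ]`,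
where `⟨n⟩ = (1 + |n|²)^{1/2}` (a finite sum since `χ` has compact support). -/
noncomputable def sigmaN (χ : ℝ × ℝ → ℝ) (N : ℕ) (t : ℝ) : ℝ :=
  (1 / (4 * π ^ 2)) *
    ∑' n : ℤ × ℤ,
      χ ((n.1 : ℝ) / N, (n.2 : ℝ) / N) ^ 2 *
        (t / (2 * Real.sqrt (1 + (n.1 : ℝ) ^ 2 + (n.2 : ℝ) ^ 2) ^ 2)
          - Real.sin (2 * t * Real.sqrt (1 + (n.1 : ℝ) ^ 2 + (n.2 : ℝ) ^ 2))
            / (4 * Real.sqrt (1 + (n.1 : ℝ) ^ 2 + (n.2 : ℝ) ^ 2) ^ 3))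


namespace VLA
open Real


lemma arctan_nonneg {x : ℝ} (hx : 0 ≤ x) : 0 ≤ Real.arctan x := by
  have := Real.arctan_strictMono.monotone hx
  simpa [Real.arctan_zero] using this

lemma arctan_le_self {x : ℝ} (hx : 0 ≤ x) : Real.arctan x ≤ x := by
  have h := Real.le_tan (arctan_nonneg hx) (Real.arctan_lt_pi_div_two x)
  rwa [Real.tan_arctan] at h

lemma sum_Icc_even (f : ℝ → ℝ) (hf : ∀ x : ℝ, f (-x) = f x) (M : ℕ) :
    ∑ k ∈ Finset.Icc (-(M : ℤ)) M, f (k : ℝ)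
      = 2 * ∑ k ∈ Finset.range (M + 1), f (k : ℝ) - f 0 := by
  induction M with
  | zero => simp; ring
  | succ M ih =>
    have h1 : Finset.Icc (-((M : ℤ) + 1)) ((M : ℤ) + 1)
        = insert (-((M : ℤ) + 1)) (insert ((M : ℤ) + 1) (Finset.Icc (-(M : ℤ)) M)) := by
      ext k; simp only [Finset.mem_Icc, Finset.mem_insert]; omega
    have h2 : (-((M : ℤ) + 1)) ∉ insert ((M : ℤ) + 1) (Finset.Icc (-(M : ℤ)) M) := by
      simp only [Finset.mem_insert, Finset.mem_Icc]; omega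
    have h3 : ((M : ℤ) + 1) ∉ Finset.Icc (-(M : ℤ)) M := by
      simp only [Finset.mem_Icc]; omega
    have hcast : (-(((M : ℕ) + 1) : ℤ)) = -((M : ℤ) + 1) := by push_cast; ring
    have hcast2 : ((((M : ℕ) + 1) : ℕ) : ℤ) = (M : ℤ) + 1 := by push_cast; ring
    rw [show ((M + 1 : ℕ) : ℤ) = (M : ℤ) + 1 by push_cast; ring]
    rw [h1, Finset.sum_insert h2, Finset.sum_insert h3, ih,
      Finset.sum_range_succ (fun k : ℕ => f (k : ℝ)) (M + 1)]
    have : f ((-((M : ℤ) + 1) : ℤ) : ℝ) = f (((M : ℤ) + 1 : ℤ) : ℝ) := by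
      push_cast
      rw [← hf ((M : ℝ) + 1)]
    rw [this]
    push_cast
    ring

lemma sum_int_close (f : ℝ → ℝ) (M : ℕ)
    (heven : ∀ x : ℝ, f (-x) = f x)
    (hanti : AntitoneOn f (Set.Icc 0 (M : ℝ)))
    (hnonneg : ∀ x : ℝ, 0 ≤ f x) :
    |∑ k ∈ Finset.Icc (-(M : ℤ)) M, f (k : ℝ) - 2 * ∫ x in (0:ℝ)..(M : ℝ), f x| ≤ f 0 := by
  have h0 : AntitoneOn f (Set.Icc 0 (0 + (M : ℝ))) := by simpa using hanti
  have h1 := h0.integral_le_sum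
  have h2 := h0.sum_le_integral
  simp only [zero_add] at h1 h2
  have hsucc : ∑ k ∈ Finset.range (M + 1), f (k : ℝ)
      = (∑ i ∈ Finset.range M, f ((i : ℝ) + 1)) + f 0 := by
    have := Finset.sum_range_succ' (fun k : ℕ => f (k : ℝ)) M
    simpa using this
  have hub : ∑ k ∈ Finset.range (M + 1), f (k : ℝ) ≤ (∫ x in (0:ℝ)..(M : ℝ), f x) + f 0 := by
    have h2' : (∑ i ∈ Finset.range M, f ((i : ℝ) + 1)) ≤ ∫ x in (0:ℝ)..(M : ℝ), f x := by
      convert h2 using 2 with i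
      push_cast; ring
    linarith [hsucc, h2']
  have hlb : (∫ x in (0:ℝ)..(M : ℝ), f x) ≤ ∑ k ∈ Finset.range (M + 1), f (k : ℝ) := by
    rw [Finset.sum_range_succ]
    have := hnonneg (M : ℝ)
    linarith [h1]
  rw [sum_Icc_even f heven M]
  rw [abs_le]
  constructor <;> linarith



lemma integral_inv_sq_add_sq (a : ℝ) (ha : 0 < a) (M : ℝ) :
    ∫ x in (0:ℝ)..M, (a ^ 2 + x ^ 2)⁻¹ = (1 / a) * Real.arctan (M / a) := by
  have hderiv : ∀ x ∈ Set.uIcc (0:ℝ) M,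
      HasDerivAt (fun y : ℝ => (1 / a) * Real.arctan (y / a)) ((a ^ 2 + x ^ 2)⁻¹) x := by
    intro x _
    have h1 : HasDerivAt (fun y : ℝ => y / a) (1 / a) x := by
      simpa using (hasDerivAt_id x).div_const a
    have h2 := (Real.hasDerivAt_arctan (x / a)).comp x h1
    have h3 := h2.const_mul (1 / a)
    refine h3.congr_deriv ?_
    symm
    field_simp
  have hint : IntervalIntegrable (fun x : ℝ => (a ^ 2 + x ^ 2)⁻¹) MeasureTheory.volume 0 M := by
    apply Continuous.intervalIntegrable
    apply Continuous.inv₀ (by continuity)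
    intro x; positivity
  rw [intervalIntegral.integral_eq_sub_of_hasDerivAt hderiv hint]
  simp

lemma integral_inv_sqrt_one_add_sq (M : ℝ) :
    ∫ x in (0:ℝ)..M, (Real.sqrt (1 + x ^ 2))⁻¹ = Real.arsinh M := by
  have hderiv : ∀ x ∈ Set.uIcc (0:ℝ) M,
      HasDerivAt Real.arsinh ((Real.sqrt (1 + x ^ 2))⁻¹) x := fun x _ =>
    Real.hasDerivAt_arsinh x
  have hint : IntervalIntegrable (fun x : ℝ => (Real.sqrt (1 + x ^ 2))⁻¹)
      MeasureTheory.volume 0 M := by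
    apply Continuous.intervalIntegrable
    apply Continuous.inv₀ (by continuity)
    intro x
    have : (0:ℝ) < 1 + x ^ 2 := by positivity
    positivity
  rw [intervalIntegral.integral_eq_sub_of_hasDerivAt hderiv hint]
  simp

lemma integral_inv_cube (a : ℝ) (ha : 1 ≤ a) (M : ℝ) (hM : 0 ≤ M) :
    ∫ x in (0:ℝ)..M, ((Real.sqrt (a ^ 2 + x ^ 2)) ^ 3)⁻¹ ≤ 1 / a ^ 2 := by
  have ha0 : 0 < a := lt_of_lt_of_le one_pos ha
  have hs : ∀ x : ℝ, 0 < Real.sqrt (a ^ 2 + x ^ 2) := by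
    intro x; apply Real.sqrt_pos.2; positivity
  have hsq : ∀ x : ℝ, (Real.sqrt (a ^ 2 + x ^ 2)) ^ 2 = a ^ 2 + x ^ 2 := by
    intro x; exact Real.sq_sqrt (by positivity)
  have hderiv : ∀ x ∈ Set.uIcc (0:ℝ) M,
      HasDerivAt (fun y : ℝ => y / (a ^ 2 * Real.sqrt (a ^ 2 + y ^ 2)))
        (((Real.sqrt (a ^ 2 + x ^ 2)) ^ 3)⁻¹) x := by
    intro x _
    have hinner : HasDerivAt (fun y : ℝ => a ^ 2 + y ^ 2) (2 * x) x := by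
      simpa using ((hasDerivAt_pow 2 x).const_add (a ^ 2))
    have hsqrt : HasDerivAt (fun y : ℝ => Real.sqrt (a ^ 2 + y ^ 2))
        (2 * x / (2 * Real.sqrt (a ^ 2 + x ^ 2))) x := hinner.sqrt (by positivity)
    have hden : HasDerivAt (fun y : ℝ => a ^ 2 * Real.sqrt (a ^ 2 + y ^ 2))
        (a ^ 2 * (2 * x / (2 * Real.sqrt (a ^ 2 + x ^ 2)))) x := hsqrt.const_mul (a ^ 2)
    have hne : a ^ 2 * Real.sqrt (a ^ 2 + x ^ 2) ≠ 0 := by positivity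
    have hdiv := (hasDerivAt_id x).div hden hne
    refine hdiv.congr_deriv ?_
    symm
    have hsx := hs x
    have hsqx := hsq x
    simp only [id]
    field_simp
    linear_combination (-1) * hsqx
  have hint : IntervalIntegrable (fun x : ℝ => ((Real.sqrt (a ^ 2 + x ^ 2)) ^ 3)⁻¹)
      MeasureTheory.volume 0 M := by
    apply Continuous.intervalIntegrable
    apply Continuous.inv₀
    · continuity
    · intro x; exact pow_ne_zero _ (hs x).ne'
  rw [intervalIntegral.integral_eq_sub_of_hasDerivAt hderiv hint]
  simp only [Real.sqrt_zero, zero_div, sub_zero]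
  rw [div_le_div_iff₀ (by positivity) (by positivity)]
  have : M ≤ Real.sqrt (a ^ 2 + M ^ 2) :=
    calc M = Real.sqrt (M ^ 2) := (Real.sqrt_sq hM).symm
    _ ≤ Real.sqrt (a ^ 2 + M ^ 2) := Real.sqrt_le_sqrt (by nlinarith)
  nlinarith [hs M, sq_nonneg a]



noncomputable def boxZ (M : ℕ) : Finset (ℤ × ℤ) := Finset.Icc (-(M:ℤ)) M ×ˢ Finset.Icc (-(M:ℤ)) M

noncomputable def Sbox (M : ℕ) : ℝ :=
  ∑ p ∈ boxZ M, (1 + (p.1 : ℝ) ^ 2 + (p.2 : ℝ) ^ 2)⁻¹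

lemma inner_est (c : ℝ) (hc : 1 ≤ c) (M : ℕ) (hM : 1 ≤ M) :
    |∑ k ∈ Finset.Icc (-(M : ℤ)) M, (c + (k : ℝ) ^ 2)⁻¹ - π / Real.sqrt c|
      ≤ 1 / c + 2 / M := by
  have hc0 : (0:ℝ) < c := lt_of_lt_of_le one_pos hc
  set a := Real.sqrt c with ha_def
  have ha1 : 1 ≤ a := by
    rw [ha_def, show (1:ℝ) = Real.sqrt 1 by simp]
    exact Real.sqrt_le_sqrt hc
  have ha0 : 0 < a := lt_of_lt_of_le one_pos ha1
  have ha2 : a ^ 2 = c := Real.sq_sqrt hc0.le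
  have hM0 : (0:ℝ) < M := by exact_mod_cast hM
  have hclose := sum_int_close (fun x => (c + x ^ 2)⁻¹) M
    (by intro x; simp [neg_pow])
    (by
      intro x hx y hy hxy
      apply inv_anti₀ (by positivity)
      nlinarith [hx.1])
    (by intro x; positivity)
  have hint : (∫ x in (0:ℝ)..(M : ℝ), (c + x ^ 2)⁻¹) = (1 / a) * Real.arctan (M / a) := by
    rw [show (fun x : ℝ => (c + x ^ 2)⁻¹) = fun x : ℝ => (a ^ 2 + x ^ 2)⁻¹ by
      funext x; rw [ha2]]
    exact integral_inv_sq_add_sq a ha0 M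
  rw [hint] at hclose
  have h0 : ((0:ℝ) ^ 2 : ℝ) = 0 := by norm_num
  have harc : Real.arctan ((M : ℝ) / a) = π / 2 - Real.arctan (a / M) := by
    rw [show (M : ℝ) / a = (a / (M : ℝ))⁻¹ by rw [inv_div]]
    exact Real.arctan_inv_of_pos (by positivity)
  have hbound : |2 * ((1 / a) * Real.arctan ((M:ℝ) / a)) - π / a| ≤ 2 / M := by
    rw [harc]
    have h1 : 0 ≤ Real.arctan (a / M) := arctan_nonneg (by positivity)
    have h2 : Real.arctan (a / M) ≤ a / M := arctan_le_self (by positivity)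
    have key1 : 0 ≤ (1 / a) * Real.arctan (a / M) :=
      mul_nonneg (by positivity) h1
    have key2 : (1 / a) * Real.arctan (a / M) ≤ 1 / M := by
      have hle : (1 / a) * Real.arctan (a / M) ≤ (1 / a) * (a / M) :=
        mul_le_mul_of_nonneg_left h2 (by positivity)
      have heq : (1 / a) * (a / (M:ℝ)) = 1 / M := by field_simp
      linarith
    have hid : 2 * ((1 / a) * (π / 2 - Real.arctan (a / M))) - π / a
        = -(2 * ((1 / a) * Real.arctan (a / M))) := by
      field_simp
      ring
    have hdm : 2 / (M:ℝ) = 2 * (1 / M) := by ring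
    rw [hid, abs_le, hdm]
    constructor <;> linarith
  have htri := abs_sub_le (∑ k ∈ Finset.Icc (-(M : ℤ)) M, (c + (k : ℝ) ^ 2)⁻¹)
    (2 * ((1 / a) * Real.arctan ((M:ℝ) / a))) (π / a)
  have hf0 : (c + (0:ℝ) ^ 2)⁻¹ = 1 / c := by norm_num
  calc |∑ k ∈ Finset.Icc (-(M : ℤ)) M, (c + (k : ℝ) ^ 2)⁻¹ - π / a|
      ≤ |∑ k ∈ Finset.Icc (-(M : ℤ)) M, (c + (k : ℝ) ^ 2)⁻¹
          - 2 * ((1 / a) * Real.arctan ((M:ℝ) / a))|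
        + |2 * ((1 / a) * Real.arctan ((M:ℝ) / a)) - π / a| := htri
    _ ≤ 1 / c + 2 / M := by
        apply add_le_add _ hbound
        have := hclose
        rw [hf0] at this
        exact this

lemma sum_inv_one_add_sq_le (M : ℕ) (hM : 1 ≤ M) :
    ∑ k ∈ Finset.Icc (-(M : ℤ)) M, (1 + (k : ℝ) ^ 2)⁻¹ ≤ π + 3 := by
  have h := inner_est 1 le_rfl M hM
  rw [Real.sqrt_one] at h
  have hM1 : 2 / (M:ℝ) ≤ 2 := by
    rw [div_le_iff₀ (by exact_mod_cast hM : (0:ℝ) < M)]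
    have : (1:ℝ) ≤ M := by exact_mod_cast hM
    nlinarith
  have := abs_le.1 h
  have h2 := this.2
  norm_num at h2 ⊢
  linarith

lemma cube_inner (c : ℝ) (hc : 1 ≤ c) (M : ℕ) :
    ∑ k ∈ Finset.Icc (-(M : ℤ)) M, ((Real.sqrt (c + (k : ℝ) ^ 2)) ^ 3)⁻¹ ≤ 3 / c := by
  have hc0 : (0:ℝ) < c := lt_of_lt_of_le one_pos hc
  have ha1 : 1 ≤ Real.sqrt c := by
    rw [show (1:ℝ) = Real.sqrt 1 by simp]
    exact Real.sqrt_le_sqrt hc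
  have ha2 : Real.sqrt c ^ 2 = c := Real.sq_sqrt hc0.le
  have hclose := sum_int_close (fun x => ((Real.sqrt (c + x ^ 2)) ^ 3)⁻¹) M
    (by intro x; simp [neg_pow])
    (by
      intro x hx y hy hxy
      have h1 : Real.sqrt (c + x ^ 2) ≤ Real.sqrt (c + y ^ 2) := by
        apply Real.sqrt_le_sqrt; nlinarith [hx.1]
      have h2 : (0:ℝ) < Real.sqrt (c + x ^ 2) := Real.sqrt_pos.2 (by positivity)
      apply inv_anti₀ (by positivity)
      exact pow_le_pow_left₀ h2.le h1 3)
    (by intro x; positivity)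
  have hintle : (∫ x in (0:ℝ)..(M : ℝ), ((Real.sqrt (c + x ^ 2)) ^ 3)⁻¹) ≤ 1 / c := by
    have := integral_inv_cube (Real.sqrt c) ha1 M (by positivity)
    rw [show (fun x : ℝ => ((Real.sqrt (Real.sqrt c ^ 2 + x ^ 2)) ^ 3)⁻¹)
        = fun x : ℝ => ((Real.sqrt (c + x ^ 2)) ^ 3)⁻¹ by funext x; rw [ha2]] at this
    rw [ha2] at this
    exact this
  have hf0 : ((Real.sqrt (c + (0:ℝ) ^ 2)) ^ 3)⁻¹ ≤ 1 / c := by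
    have h1 : c ≤ Real.sqrt c ^ 3 := by
      calc c = Real.sqrt c ^ 2 * 1 := by rw [ha2]; ring
      _ ≤ Real.sqrt c ^ 2 * Real.sqrt c := by nlinarith
      _ = Real.sqrt c ^ 3 := by ring
    rw [show c + (0:ℝ) ^ 2 = c by ring, one_div]
    exact inv_anti₀ hc0 h1
  have := abs_le.1 hclose
  have h2 := this.2
  have h3c : 3 / c = 1 / c + 1 / c + 1 / c := by ring
  rw [h3c]
  linarith [hintle, hf0, h2]


lemma card_IccZ (M : ℕ) : (Finset.Icc (-(M:ℤ)) M).card = 2 * M + 1 := by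
  rw [Int.card_Icc]
  omega

lemma Sbox_est (M : ℕ) (hM : 1 ≤ M) : |Sbox M - 2 * π * Real.log M| ≤ 33 := by
  have hM0 : (0:ℝ) < M := by exact_mod_cast hM
  have hMR : (1:ℝ) ≤ M := by exact_mod_cast hM
  rw [Sbox, boxZ, Finset.sum_product]
  set I := Finset.Icc (-(M:ℤ)) M with hI
  -- step 1
  have hstep1 : |(∑ n₁ ∈ I, ∑ n₂ ∈ I, (1 + (n₁ : ℝ) ^ 2 + (n₂ : ℝ) ^ 2)⁻¹)
      - ∑ n₁ ∈ I, π / Real.sqrt (1 + (n₁ : ℝ) ^ 2)| ≤ π + 9 := by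
    rw [← Finset.sum_sub_distrib]
    calc |∑ n₁ ∈ I, ((∑ n₂ ∈ I, (1 + (n₁ : ℝ) ^ 2 + (n₂ : ℝ) ^ 2)⁻¹)
          - π / Real.sqrt (1 + (n₁ : ℝ) ^ 2))|
        ≤ ∑ n₁ ∈ I, |(∑ n₂ ∈ I, (1 + (n₁ : ℝ) ^ 2 + (n₂ : ℝ) ^ 2)⁻¹)
          - π / Real.sqrt (1 + (n₁ : ℝ) ^ 2)| := Finset.abs_sum_le_sum_abs _ _
      _ ≤ ∑ n₁ ∈ I, ((1 + (n₁ : ℝ) ^ 2)⁻¹ + 2 / (M:ℝ)) := by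
          apply Finset.sum_le_sum
          intro n₁ _
          have := inner_est (1 + (n₁ : ℝ) ^ 2) (by nlinarith [sq_nonneg ((n₁:ℝ))]) M hM
          rw [one_div] at this
          exact this
      _ = (∑ n₁ ∈ I, (1 + (n₁ : ℝ) ^ 2)⁻¹) + (2 * (M:ℝ) + 1) * (2 / (M:ℝ)) := by
          rw [Finset.sum_add_distrib, Finset.sum_const, card_IccZ]
          push_cast
          ring
      _ ≤ (π + 3) + (2 * (M:ℝ) + 1) * (2 / (M:ℝ)) := by
          have := sum_inv_one_add_sq_le M hM
          linarith
      _ ≤ π + 9 := by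
          have : (2 * (M:ℝ) + 1) * (2 / M) = 4 + 2 / M := by field_simp; ring
          rw [this]
          have : 2 / (M:ℝ) ≤ 2 := by rw [div_le_iff₀ hM0]; nlinarith
          linarith
  -- step 2
  have hstep2 : |(∑ n₁ ∈ I, π / Real.sqrt (1 + (n₁ : ℝ) ^ 2)) - 2 * π * Real.arsinh M| ≤ π := by
    have hclose := sum_int_close (fun x => (Real.sqrt (1 + x ^ 2))⁻¹) M
      (by intro x; simp [neg_pow])
      (by
        intro x hx y hy hxy
        have h1 : Real.sqrt (1 + x ^ 2) ≤ Real.sqrt (1 + y ^ 2) := by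
          apply Real.sqrt_le_sqrt; nlinarith [hx.1]
        have h2 : (0:ℝ) < Real.sqrt (1 + x ^ 2) := Real.sqrt_pos.2 (by positivity)
        exact inv_anti₀ h2 h1)
      (by intro x; positivity)
    rw [integral_inv_sqrt_one_add_sq] at hclose
    have hrw : (∑ n₁ ∈ I, π / Real.sqrt (1 + (n₁ : ℝ) ^ 2))
        = π * ∑ n₁ ∈ I, (Real.sqrt (1 + (n₁ : ℝ) ^ 2))⁻¹ := by
      rw [Finset.mul_sum]
      apply Finset.sum_congr rfl
      intro k _
      rw [div_eq_mul_inv]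
    rw [hrw]
    have : π * (∑ n₁ ∈ I, (Real.sqrt (1 + (n₁ : ℝ) ^ 2))⁻¹) - 2 * π * Real.arsinh M
        = π * ((∑ n₁ ∈ I, (Real.sqrt (1 + (n₁ : ℝ) ^ 2))⁻¹) - 2 * Real.arsinh M) := by ring
    rw [this, abs_mul, abs_of_pos Real.pi_pos]
    calc π * |(∑ n₁ ∈ I, (Real.sqrt (1 + (n₁ : ℝ) ^ 2))⁻¹) - 2 * Real.arsinh M|
        ≤ π * 1 := by
          apply mul_le_mul_of_nonneg_left _ Real.pi_pos.le
          have h01 : (Real.sqrt (1 + (0:ℝ) ^ 2))⁻¹ = 1 := by norm_num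
          rw [h01] at hclose
          exact hclose
      _ = π := mul_one π
  -- step 3
  have hstep3 : |2 * π * Real.arsinh M - 2 * π * Real.log M| ≤ 12 := by
    have hars : Real.arsinh (M:ℝ) = Real.log ((M:ℝ) + Real.sqrt (1 + (M:ℝ) ^ 2)) := rfl
    have hsqrt_nonneg : 0 ≤ Real.sqrt (1 + (M:ℝ) ^ 2) := Real.sqrt_nonneg _
    have hlow : Real.log M ≤ Real.arsinh M := by
      rw [hars]
      apply Real.log_le_log hM0
      linarith
    have hsqrt_le : Real.sqrt (1 + (M:ℝ) ^ 2) ≤ 2 * M := by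
      calc Real.sqrt (1 + (M:ℝ) ^ 2) ≤ Real.sqrt ((2 * M) ^ 2) := by
            apply Real.sqrt_le_sqrt; nlinarith
      _ = 2 * M := Real.sqrt_sq (by positivity)
    have hup : Real.arsinh M ≤ Real.log 3 + Real.log M := by
      rw [hars, ← Real.log_mul (by norm_num) (ne_of_gt hM0)]
      apply Real.log_le_log (by linarith)
      linarith
    have hlog3 : Real.log 3 ≤ 1.4 := by
      have h1 : Real.log 3 ≤ Real.log 4 := Real.log_le_log (by norm_num) (by norm_num)
      have h2 : Real.log 4 = 2 * Real.log 2 := by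
        rw [show (4:ℝ) = 2 ^ 2 by norm_num, Real.log_pow]
        push_cast; ring
      have h3 := Real.log_two_lt_d9
      linarith
    have hpi := Real.pi_le_four
    have hpi0 := Real.pi_pos
    rw [abs_le]
    constructor <;> nlinarith
  -- combine
  have h1 := abs_sub_le ((∑ n₁ ∈ I, ∑ n₂ ∈ I, (1 + (n₁ : ℝ) ^ 2 + (n₂ : ℝ) ^ 2)⁻¹))
    (∑ n₁ ∈ I, π / Real.sqrt (1 + (n₁ : ℝ) ^ 2)) (2 * π * Real.arsinh M)
  have h2 := abs_sub_le ((∑ n₁ ∈ I, ∑ n₂ ∈ I, (1 + (n₁ : ℝ) ^ 2 + (n₂ : ℝ) ^ 2)⁻¹))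
    (2 * π * Real.arsinh M) (2 * π * Real.log M)
  have hpi := Real.pi_le_four
  linarith

lemma cube_est (M : ℕ) (hM : 1 ≤ M) :
    ∑ p ∈ boxZ M,
      ((Real.sqrt (1 + (p.1 : ℝ) ^ 2 + (p.2 : ℝ) ^ 2)) ^ 3)⁻¹ ≤ 21 := by
  rw [boxZ, Finset.sum_product]
  have hstep : ∀ n₁ ∈ Finset.Icc (-(M:ℤ)) M,
      ∑ n₂ ∈ Finset.Icc (-(M:ℤ)) M,
        ((Real.sqrt (1 + (n₁ : ℝ) ^ 2 + (n₂ : ℝ) ^ 2)) ^ 3)⁻¹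
      ≤ 3 * (1 + (n₁ : ℝ) ^ 2)⁻¹ := by
    intro n₁ _
    have := cube_inner (1 + (n₁ : ℝ) ^ 2) (by nlinarith [sq_nonneg ((n₁:ℝ))]) M
    rw [div_eq_mul_inv] at this
    exact this
  calc ∑ n₁ ∈ Finset.Icc (-(M:ℤ)) M, ∑ n₂ ∈ Finset.Icc (-(M:ℤ)) M,
        ((Real.sqrt (1 + (n₁ : ℝ) ^ 2 + (n₂ : ℝ) ^ 2)) ^ 3)⁻¹
      ≤ ∑ n₁ ∈ Finset.Icc (-(M:ℤ)) M, 3 * (1 + (n₁ : ℝ) ^ 2)⁻¹ :=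
        Finset.sum_le_sum hstep
    _ = 3 * ∑ n₁ ∈ Finset.Icc (-(M:ℤ)) M, (1 + (n₁ : ℝ) ^ 2)⁻¹ := by
        rw [Finset.mul_sum]
    _ ≤ 3 * (π + 3) := by
        have := sum_inv_one_add_sq_le M hM
        linarith
    _ ≤ 21 := by nlinarith [Real.pi_le_four]


lemma abs_fst_le_enorm2 (x : ℝ × ℝ) : |x.1| ≤ enorm2 x := by
  rw [enorm2, show |x.1| = Real.sqrt (x.1 ^ 2) by rw [Real.sqrt_sq_eq_abs]]
  exact Real.sqrt_le_sqrt (by nlinarith [sq_nonneg x.2])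

lemma abs_snd_le_enorm2 (x : ℝ × ℝ) : |x.2| ≤ enorm2 x := by
  rw [enorm2, show |x.2| = Real.sqrt (x.2 ^ 2) by rw [Real.sqrt_sq_eq_abs]]
  exact Real.sqrt_le_sqrt (by nlinarith [sq_nonneg x.1])

lemma enorm2_le (x : ℝ × ℝ) (r : ℝ) (hr : 0 ≤ r) (h : x.1 ^ 2 + x.2 ^ 2 ≤ r ^ 2) :
    enorm2 x ≤ r := by
  rw [enorm2]
  calc Real.sqrt (x.1 ^ 2 + x.2 ^ 2) ≤ Real.sqrt (r ^ 2) := Real.sqrt_le_sqrt h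
  _ = r := Real.sqrt_sq hr

lemma cp_one_le (p : ℤ × ℤ) : (1:ℝ) ≤ 1 + (p.1 : ℝ) ^ 2 + (p.2 : ℝ) ^ 2 := by
  nlinarith [sq_nonneg ((p.1 : ℝ)), sq_nonneg ((p.2 : ℝ))]

lemma cp_pos (p : ℤ × ℤ) : (0:ℝ) < 1 + (p.1 : ℝ) ^ 2 + (p.2 : ℝ) ^ 2 :=
  lt_of_lt_of_le one_pos (cp_one_le p)

lemma dp_one_le (p : ℤ × ℤ) : (1:ℝ) ≤ Real.sqrt (1 + (p.1 : ℝ) ^ 2 + (p.2 : ℝ) ^ 2) := by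
  rw [show (1:ℝ) = Real.sqrt 1 by simp]
  exact Real.sqrt_le_sqrt (by rw [Real.sqrt_one]; exact cp_one_le p)

noncomputable def TN (χ : ℝ × ℝ → ℝ) (N : ℕ) : ℝ :=
  ∑ p ∈ boxZ N, χ ((p.1 : ℝ) / N, (p.2 : ℝ) / N) ^ 2 * (1 + (p.1 : ℝ) ^ 2 + (p.2 : ℝ) ^ 2)⁻¹

noncomputable def EN (χ : ℝ × ℝ → ℝ) (N : ℕ) (t : ℝ) : ℝ :=
  ∑ p ∈ boxZ N, χ ((p.1 : ℝ) / N, (p.2 : ℝ) / N) ^ 2 *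
    (Real.sin (2 * t * Real.sqrt (1 + (p.1 : ℝ) ^ 2 + (p.2 : ℝ) ^ 2))
      / (4 * Real.sqrt (1 + (p.1 : ℝ) ^ 2 + (p.2 : ℝ) ^ 2) ^ 3))

lemma sigma_eq (χ : ℝ × ℝ → ℝ) (hχsupp : ∀ ξ, 1 < enorm2 ξ → χ ξ = 0)
    (N : ℕ) (hN : 1 ≤ N) (t : ℝ) :
    sigmaN χ N t = (1 / (4 * π ^ 2)) * ((t / 2) * TN χ N - EN χ N t) := by
  have hN0 : (0:ℝ) < N := by exact_mod_cast hN
  have hvanish : ∀ p : ℤ × ℤ, p ∉ boxZ N →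
      χ ((p.1 : ℝ) / N, (p.2 : ℝ) / N) ^ 2 *
        (t / (2 * Real.sqrt (1 + (p.1 : ℝ) ^ 2 + (p.2 : ℝ) ^ 2) ^ 2)
          - Real.sin (2 * t * Real.sqrt (1 + (p.1 : ℝ) ^ 2 + (p.2 : ℝ) ^ 2))
            / (4 * Real.sqrt (1 + (p.1 : ℝ) ^ 2 + (p.2 : ℝ) ^ 2) ^ 3)) = 0 := by
    intro p hp
    have hzero : χ ((p.1 : ℝ) / N, (p.2 : ℝ) / N) = 0 := by
      apply hχsupp
      rw [boxZ, Finset.mem_product, not_and_or] at hp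
      rcases hp with h | h
      · rw [Finset.mem_Icc] at h
        have habs : (N:ℝ) < |(p.1:ℝ)| := by
          have h' : p.1 < -(N:ℤ) ∨ (N:ℤ) < p.1 := by omega
          rcases h' with h' | h'
          · have hc : (p.1 : ℝ) < -(N:ℝ) := by exact_mod_cast h'
            rw [abs_of_neg (by linarith)]
            linarith
          · have hc : (N:ℝ) < (p.1 : ℝ) := by exact_mod_cast h'
            rw [abs_of_pos (by linarith)]
            exact hc
        calc (1:ℝ) < |(p.1:ℝ)| / N := (one_lt_div hN0).mpr habs
        _ = |(p.1:ℝ) / N| := by rw [abs_div, abs_of_pos hN0]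
        _ ≤ enorm2 ((p.1 : ℝ) / N, (p.2 : ℝ) / N) := abs_fst_le_enorm2 ((p.1 : ℝ) / N, (p.2 : ℝ) / N)
      · rw [Finset.mem_Icc] at h
        have habs : (N:ℝ) < |(p.2:ℝ)| := by
          have h' : p.2 < -(N:ℤ) ∨ (N:ℤ) < p.2 := by omega
          rcases h' with h' | h'
          · have hc : (p.2 : ℝ) < -(N:ℝ) := by exact_mod_cast h'
            rw [abs_of_neg (by linarith)]
            linarith
          · have hc : (N:ℝ) < (p.2 : ℝ) := by exact_mod_cast h'
            rw [abs_of_pos (by linarith)]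
            exact hc
        calc (1:ℝ) < |(p.2:ℝ)| / N := (one_lt_div hN0).mpr habs
        _ = |(p.2:ℝ) / N| := by rw [abs_div, abs_of_pos hN0]
        _ ≤ enorm2 ((p.1 : ℝ) / N, (p.2 : ℝ) / N) := abs_snd_le_enorm2 ((p.1 : ℝ) / N, (p.2 : ℝ) / N)
    rw [hzero]
    ring
  rw [sigmaN, tsum_eq_sum hvanish]
  congr 1
  rw [TN, EN, Finset.mul_sum, ← Finset.sum_sub_distrib]
  apply Finset.sum_congr rfl
  intro p _
  have hsq : Real.sqrt (1 + (p.1 : ℝ) ^ 2 + (p.2 : ℝ) ^ 2) ^ 2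
      = 1 + (p.1 : ℝ) ^ 2 + (p.2 : ℝ) ^ 2 := Real.sq_sqrt (cp_pos p).le
  have hc' : (1 + (p.1 : ℝ) ^ 2 + (p.2 : ℝ) ^ 2) ≠ 0 := (cp_pos p).ne'
  have hd' : Real.sqrt (1 + (p.1 : ℝ) ^ 2 + (p.2 : ℝ) ^ 2) ≠ 0 := by
    have := dp_one_le p; intro h; rw [h] at this; linarith
  rw [hsq]
  field_simp

lemma EN_est (χ : ℝ × ℝ → ℝ) (B : ℝ) (hB0' : 0 ≤ B) (hχB : ∀ ξ, χ ξ ^ 2 ≤ B)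
    (N : ℕ) (hN : 1 ≤ N) (t : ℝ) : |EN χ N t| ≤ 6 * B := by
  rw [EN]
  have hstep : ∀ p ∈ boxZ N,
      |χ ((p.1 : ℝ) / N, (p.2 : ℝ) / N) ^ 2 *
        (Real.sin (2 * t * Real.sqrt (1 + (p.1 : ℝ) ^ 2 + (p.2 : ℝ) ^ 2))
          / (4 * Real.sqrt (1 + (p.1 : ℝ) ^ 2 + (p.2 : ℝ) ^ 2) ^ 3))|
      ≤ B / 4 * ((Real.sqrt (1 + (p.1 : ℝ) ^ 2 + (p.2 : ℝ) ^ 2)) ^ 3)⁻¹ := by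
    intro p _
    have hd1 := dp_one_le p
    have hd0 : (0:ℝ) < Real.sqrt (1 + (p.1 : ℝ) ^ 2 + (p.2 : ℝ) ^ 2) := by linarith
    have hden : (0:ℝ) < 4 * Real.sqrt (1 + (p.1 : ℝ) ^ 2 + (p.2 : ℝ) ^ 2) ^ 3 := by positivity
    rw [abs_mul, abs_of_nonneg (sq_nonneg _), abs_div, abs_of_pos hden]
    calc χ ((p.1 : ℝ) / N, (p.2 : ℝ) / N) ^ 2 *
          (|Real.sin (2 * t * Real.sqrt (1 + (p.1 : ℝ) ^ 2 + (p.2 : ℝ) ^ 2))|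
            / (4 * Real.sqrt (1 + (p.1 : ℝ) ^ 2 + (p.2 : ℝ) ^ 2) ^ 3))
        ≤ B * (1 / (4 * Real.sqrt (1 + (p.1 : ℝ) ^ 2 + (p.2 : ℝ) ^ 2) ^ 3)) := by
          apply mul_le_mul (hχB _) _ (by positivity) hB0'
          apply (div_le_div_iff_of_pos_right hden).mpr
          exact abs_le.mpr ⟨Real.neg_one_le_sin _, Real.sin_le_one _⟩
      _ = B / 4 * ((Real.sqrt (1 + (p.1 : ℝ) ^ 2 + (p.2 : ℝ) ^ 2)) ^ 3)⁻¹ := by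
          field_simp
  calc |∑ p ∈ boxZ N, χ ((p.1 : ℝ) / N, (p.2 : ℝ) / N) ^ 2 *
        (Real.sin (2 * t * Real.sqrt (1 + (p.1 : ℝ) ^ 2 + (p.2 : ℝ) ^ 2))
          / (4 * Real.sqrt (1 + (p.1 : ℝ) ^ 2 + (p.2 : ℝ) ^ 2) ^ 3))|
      ≤ ∑ p ∈ boxZ N, |χ ((p.1 : ℝ) / N, (p.2 : ℝ) / N) ^ 2 *
        (Real.sin (2 * t * Real.sqrt (1 + (p.1 : ℝ) ^ 2 + (p.2 : ℝ) ^ 2))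
          / (4 * Real.sqrt (1 + (p.1 : ℝ) ^ 2 + (p.2 : ℝ) ^ 2) ^ 3))| :=
        Finset.abs_sum_le_sum_abs _ _
    _ ≤ ∑ p ∈ boxZ N, B / 4 * ((Real.sqrt (1 + (p.1 : ℝ) ^ 2 + (p.2 : ℝ) ^ 2)) ^ 3)⁻¹ :=
        Finset.sum_le_sum hstep
    _ = B / 4 * ∑ p ∈ boxZ N, ((Real.sqrt (1 + (p.1 : ℝ) ^ 2 + (p.2 : ℝ) ^ 2)) ^ 3)⁻¹ := by
        rw [Finset.mul_sum]
    _ ≤ B / 4 * 21 := by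
        apply mul_le_mul_of_nonneg_left (cube_est N hN) (by positivity)
    _ ≤ 6 * B := by linarith

set_option maxHeartbeats 1000000 in
lemma TN_est (χ : ℝ × ℝ → ℝ) (B : ℝ) (hB1 : 1 ≤ B) (hχB : ∀ ξ, χ ξ ^ 2 ≤ B)
    (hχone : ∀ ξ, enorm2 ξ ≤ 1 / 2 → χ ξ = 1)
    (N : ℕ) (hN : 2 ≤ N) :
    |TN χ N - 2 * π * Real.log N| ≤ 83 * B + 50 := by
  have hB0' : (0:ℝ) ≤ B := le_trans zero_le_one hB1
  have hNnat : 0 < N := by omega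
  have hN0 : (0:ℝ) < N := by exact_mod_cast hNnat
  have hpi4 := Real.pi_le_four
  have hpi0 := Real.pi_pos
  have hlogN0 : 0 ≤ Real.log N := Real.log_nonneg (by exact_mod_cast hNnat)
  have hS1 := Sbox_est N (by omega)
  obtain ⟨hS1l, hS1u⟩ := abs_le.1 hS1
  have hTub : TN χ N ≤ B * Sbox N := by
    rw [TN, Sbox, Finset.mul_sum]
    apply Finset.sum_le_sum
    intro p _
    exact mul_le_mul_of_nonneg_right (hχB _) (inv_nonneg.mpr (cp_pos p).le)
  have hlog2 := Real.log_two_lt_d9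
  have hlog2' : 0 < Real.log 2 := Real.log_pos (by norm_num)
  have h8 : Real.log 8 = 3 * Real.log 2 := by
    rw [show (8:ℝ) = 2 ^ 3 by norm_num, Real.log_pow]; push_cast; ring
  by_cases hN6 : 6 ≤ N
  · -- large N
    set M₀ := N / 3 with hM₀def
    have hM₀2 : 2 ≤ M₀ := by omega
    have hM₀1 : 1 ≤ M₀ := by omega
    have hM₀N : M₀ ≤ N := by omega
    have hM₀0 : (0:ℝ) < M₀ := by exact_mod_cast (by omega : 0 < M₀)
    have hsub : boxZ M₀ ⊆ boxZ N := by
      rw [boxZ, boxZ]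
      apply Finset.product_subset_product <;>
        · apply Finset.Icc_subset_Icc
          · simp only [neg_le_neg_iff]; exact_mod_cast hM₀N
          · exact_mod_cast hM₀N
    have hone : ∀ p ∈ boxZ M₀, χ ((p.1 : ℝ) / N, (p.2 : ℝ) / N) = 1 := by
      intro p hp
      apply hχone
      apply enorm2_le _ _ (by norm_num)
      rw [boxZ, Finset.mem_product, Finset.mem_Icc, Finset.mem_Icc] at hp
      have h1 : ((p.1:ℝ)) ^ 2 ≤ (M₀:ℝ) ^ 2 := by
        have ha : |(p.1:ℝ)| ≤ (M₀:ℝ) := by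
          rw [abs_le]; constructor <;> [exact_mod_cast hp.1.1; exact_mod_cast hp.1.2]
        nlinarith [sq_abs ((p.1:ℝ)), abs_nonneg ((p.1:ℝ))]
      have h2 : ((p.2:ℝ)) ^ 2 ≤ (M₀:ℝ) ^ 2 := by
        have ha : |(p.2:ℝ)| ≤ (M₀:ℝ) := by
          rw [abs_le]; constructor <;> [exact_mod_cast hp.2.1; exact_mod_cast hp.2.2]
        nlinarith [sq_abs ((p.2:ℝ)), abs_nonneg ((p.2:ℝ))]
      have h3 : (M₀:ℝ) ≤ (N:ℝ) / 3 := by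
        rw [hM₀def]
        exact_mod_cast Nat.cast_div_le
      have h4 : (M₀:ℝ) ^ 2 ≤ (N:ℝ) ^ 2 / 9 := by nlinarith [hM₀0.le]
      show ((p.1:ℝ) / N) ^ 2 + ((p.2:ℝ) / N) ^ 2 ≤ (1/2) ^ 2
      rw [div_pow, div_pow, ← add_div, div_le_iff₀ (by positivity)]
      nlinarith
    have hTlb : Sbox M₀ ≤ TN χ N := by
      rw [Sbox, TN]
      have heq : ∑ p ∈ boxZ M₀, (1 + (p.1 : ℝ) ^ 2 + (p.2 : ℝ) ^ 2)⁻¹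
          = ∑ p ∈ boxZ M₀,
            χ ((p.1 : ℝ) / N, (p.2 : ℝ) / N) ^ 2 * (1 + (p.1 : ℝ) ^ 2 + (p.2 : ℝ) ^ 2)⁻¹ := by
        apply Finset.sum_congr rfl
        intro p hp
        rw [hone p hp]; ring
      rw [heq]
      apply Finset.sum_le_sum_of_subset_of_nonneg hsub
      intro p _ _
      exact mul_nonneg (sq_nonneg _) (inv_nonneg.mpr (cp_pos p).le)
    have hTub2 : TN χ N ≤ Sbox M₀ + B * (Sbox N - Sbox M₀) := by
      have hsplit : (∑ p ∈ boxZ N \ boxZ M₀, (1 + (p.1 : ℝ) ^ 2 + (p.2 : ℝ) ^ 2)⁻¹)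
          + ∑ p ∈ boxZ M₀, (1 + (p.1 : ℝ) ^ 2 + (p.2 : ℝ) ^ 2)⁻¹ = Sbox N :=
        Finset.sum_sdiff hsub
      have hsplit2 : (∑ p ∈ boxZ N \ boxZ M₀,
            χ ((p.1 : ℝ) / N, (p.2 : ℝ) / N) ^ 2 * (1 + (p.1 : ℝ) ^ 2 + (p.2 : ℝ) ^ 2)⁻¹)
          + ∑ p ∈ boxZ M₀,
            χ ((p.1 : ℝ) / N, (p.2 : ℝ) / N) ^ 2 * (1 + (p.1 : ℝ) ^ 2 + (p.2 : ℝ) ^ 2)⁻¹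
          = TN χ N := Finset.sum_sdiff hsub
      have h1 : ∑ p ∈ boxZ M₀,
          χ ((p.1 : ℝ) / N, (p.2 : ℝ) / N) ^ 2 * (1 + (p.1 : ℝ) ^ 2 + (p.2 : ℝ) ^ 2)⁻¹
          = Sbox M₀ := by
        rw [Sbox]
        apply Finset.sum_congr rfl
        intro p hp
        rw [hone p hp]; ring
      have h2 : (∑ p ∈ boxZ N \ boxZ M₀,
            χ ((p.1 : ℝ) / N, (p.2 : ℝ) / N) ^ 2 * (1 + (p.1 : ℝ) ^ 2 + (p.2 : ℝ) ^ 2)⁻¹)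
          ≤ B * ∑ p ∈ boxZ N \ boxZ M₀, (1 + (p.1 : ℝ) ^ 2 + (p.2 : ℝ) ^ 2)⁻¹ := by
        rw [Finset.mul_sum]
        apply Finset.sum_le_sum
        intro p _
        exact mul_le_mul_of_nonneg_right (hχB _) (inv_nonneg.mpr (cp_pos p).le)
      have hs0 : (∑ p ∈ boxZ M₀, (1 + (p.1 : ℝ) ^ 2 + (p.2 : ℝ) ^ 2)⁻¹) = Sbox M₀ := rfl
      have h3 : (∑ p ∈ boxZ N \ boxZ M₀, (1 + (p.1 : ℝ) ^ 2 + (p.2 : ℝ) ^ 2)⁻¹)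
          = Sbox N - Sbox M₀ := by rw [← hsplit, hs0]; ring
      rw [h3] at h2
      linarith
    have hS0 := Sbox_est M₀ hM₀1
    obtain ⟨hS0l, hS0u⟩ := abs_le.1 hS0
    have hlogM0 : 0 ≤ Real.log M₀ := Real.log_nonneg (by exact_mod_cast hM₀1)
    have hmono : Real.log M₀ ≤ Real.log N :=
      Real.log_le_log hM₀0 (by exact_mod_cast hM₀N)
    have hdiff : Real.log N - Real.log M₀ ≤ 2.1 := by
      have hN6M : (N:ℝ) ≤ 6 * M₀ := by exact_mod_cast (by omega : N ≤ 6 * M₀)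
      have hle : Real.log N ≤ Real.log (6 * M₀) := Real.log_le_log hN0 hN6M
      rw [Real.log_mul (by norm_num) (ne_of_gt hM₀0)] at hle
      have h6 : Real.log 6 ≤ Real.log 8 := Real.log_le_log (by norm_num) (by norm_num)
      linarith [h8 ▸ h6]
    have hd0 : 0 ≤ Real.log N - Real.log M₀ := by linarith
    have hkey0 : 2 * π * (Real.log N - Real.log M₀) ≤ 17 :=
      le_trans (mul_le_mul_of_nonneg_right (by linarith : 2 * π ≤ 8) hd0) (by linarith)
    have p1 : B * Sbox N ≤ B * (2 * π * Real.log N + 33) :=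
      mul_le_mul_of_nonneg_left (by linarith) hB0'
    have p2 : (B - 1) * (2 * π * Real.log M₀ - 33) ≤ (B - 1) * Sbox M₀ :=
      mul_le_mul_of_nonneg_left (by linarith) (by linarith)
    have hkey : (B - 1) * (2 * π * (Real.log N - Real.log M₀)) ≤ (B - 1) * 17 :=
      mul_le_mul_of_nonneg_left hkey0 (by linarith)
    rw [abs_le]
    constructor
    · linarith
    · linarith [p1, p2, hkey, hTub2]
  · -- small N
    push_neg at hN6
    have hT1 : (1:ℝ) ≤ TN χ N := by
      rw [TN]
      have h0mem : (0:ℤ) ∈ Finset.Icc (-(N:ℤ)) N := by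
        rw [Finset.mem_Icc]; omega
      have hmem : ((0,0) : ℤ × ℤ) ∈ boxZ N := Finset.mem_product.mpr ⟨h0mem, h0mem⟩
      have hle := Finset.single_le_sum
        (f := fun p : ℤ × ℤ => χ ((p.1 : ℝ) / N, (p.2 : ℝ) / N) ^ 2
          * (1 + (p.1 : ℝ) ^ 2 + (p.2 : ℝ) ^ 2)⁻¹)
        (fun p _ => mul_nonneg (sq_nonneg _) (inv_nonneg.mpr (cp_pos p).le)) hmem
      have hle' : χ (((0:ℤ):ℝ) / N, ((0:ℤ):ℝ) / N) ^ 2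
          * (1 + ((0:ℤ):ℝ) ^ 2 + ((0:ℤ):ℝ) ^ 2)⁻¹
          ≤ ∑ p ∈ boxZ N, χ ((p.1 : ℝ) / N, (p.2 : ℝ) / N) ^ 2
            * (1 + (p.1 : ℝ) ^ 2 + (p.2 : ℝ) ^ 2)⁻¹ := hle
      have h00 : ((0:ℤ):ℝ) / N = 0 := by simp
      rw [h00] at hle'
      have hone0 : χ ((0:ℝ), (0:ℝ)) = 1 := by
        apply hχone
        rw [enorm2]
        norm_num
      rw [hone0] at hle'
      norm_num at hle'
      exact hle'
    have hlogN17 : 2 * π * Real.log N ≤ 17 := by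
      have hle : Real.log N ≤ Real.log 8 :=
        Real.log_le_log hN0 (by exact_mod_cast (by omega : N ≤ 8))
      nlinarith [h8 ▸ hle]
    have hnn : 0 ≤ 2 * π * Real.log N := by positivity
    have hq : B * (2 * π * Real.log N + 33) ≤ B * 50 :=
      mul_le_mul_of_nonneg_left (by linarith) hB0'
    have p1 : B * Sbox N ≤ B * (2 * π * Real.log N + 33) :=
      mul_le_mul_of_nonneg_left (by linarith) hB0'
    rw [abs_le]
    constructor
    · linarith
    · linarith [hTub, p1, hq, hnn]




end VLA

open VLA in
/-- asymptotics (1.11) of the renormalization constant: there is a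
constant `C > 0` such that for every integer `N ≥ 2` and every `t ∈ [0, 1]`:
`|σ_N(t) − (t/(4π)) log N| ≤ C`. -/
theorem variance_log_asymptotics
    (χ : ℝ × ℝ → ℝ) (hχsmooth : ContDiff ℝ (⊤ : ℕ∞) χ) (hχnonneg : ∀ ξ, 0 ≤ χ ξ)
    (hχsupp : ∀ ξ, 1 < enorm2 ξ → χ ξ = 0)
    (hχone : ∀ ξ, enorm2 ξ ≤ 1 / 2 → χ ξ = 1) :
    ∃ C : ℝ, 0 < C ∧ ∀ N : ℕ, 2 ≤ N → ∀ t : ℝ, t ∈ Set.Icc (0 : ℝ) 1 →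
      |sigmaN χ N t - t / (4 * π) * Real.log N| ≤ C := by
  obtain ⟨B0, hB0⟩ := (isCompact_closedBall (0 : ℝ × ℝ) 1).exists_bound_of_continuousOn
    hχsmooth.continuous.continuousOn
  set B : ℝ := max (B0 ^ 2) 1 with hBdef
  have hB1 : (1:ℝ) ≤ B := le_max_right _ _
  have hB0' : (0:ℝ) ≤ B := le_trans zero_le_one hB1
  have hχB : ∀ ξ : ℝ × ℝ, χ ξ ^ 2 ≤ B := by
    intro ξ
    by_cases h : enorm2 ξ ≤ 1
    · have hξball : ξ ∈ Metric.closedBall (0 : ℝ × ℝ) 1 := by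
        rw [Metric.mem_closedBall, dist_zero_right, Prod.norm_def]
        simp only [Real.norm_eq_abs]
        exact max_le ((abs_fst_le_enorm2 ξ).trans h) ((abs_snd_le_enorm2 ξ).trans h)
      have habs : |χ ξ| ≤ B0 := by
        have := hB0 ξ hξball
        rwa [Real.norm_eq_abs] at this
      calc χ ξ ^ 2 = |χ ξ| ^ 2 := (sq_abs _).symm
      _ ≤ B0 ^ 2 := by nlinarith [abs_nonneg (χ ξ)]
      _ ≤ B := le_max_left _ _
    · rw [hχsupp ξ (lt_of_not_ge h)]
      simpa using hB0'
  refine ⟨89 * B + 50, by linarith, ?_⟩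
  intro N hN t ht
  obtain ⟨ht0, ht1⟩ := ht
  have hpi0 := Real.pi_pos
  have hpi3 := Real.pi_gt_three
  have hrep := sigma_eq χ hχsupp N (by omega) t
  have hT := TN_est χ B hB1 hχB hχone N hN
  have hE := EN_est χ B hB0' hχB N (by omega) t
  rw [hrep]
  have hπ : π ≠ 0 := ne_of_gt hpi0
  have hid : (1 / (4 * π ^ 2)) * ((t / 2) * TN χ N - EN χ N t) - t / (4 * π) * Real.log N
      = (t / (8 * π ^ 2)) * (TN χ N - 2 * π * Real.log N) - EN χ N t / (4 * π ^ 2) := by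
    field_simp
    ring
  rw [hid]
  have h1 : |(t / (8 * π ^ 2)) * (TN χ N - 2 * π * Real.log N)| ≤ 83 * B + 50 := by
    rw [abs_mul]
    have ht8 : |t / (8 * π ^ 2)| ≤ 1 := by
      rw [abs_div, abs_of_nonneg ht0, abs_of_pos (by positivity : (0:ℝ) < 8 * π ^ 2)]
      rw [div_le_one (by positivity)]
      nlinarith
    calc |t / (8 * π ^ 2)| * |TN χ N - 2 * π * Real.log N|
        ≤ 1 * |TN χ N - 2 * π * Real.log N| :=
          mul_le_mul_of_nonneg_right ht8 (abs_nonneg _)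
      _ = |TN χ N - 2 * π * Real.log N| := one_mul _
      _ ≤ 83 * B + 50 := hT
  have h2 : |EN χ N t / (4 * π ^ 2)| ≤ 6 * B := by
    rw [abs_div, abs_of_pos (by positivity : (0:ℝ) < 4 * π ^ 2)]
    calc |EN χ N t| / (4 * π ^ 2) ≤ |EN χ N t| / 1 := by
          apply div_le_div_of_nonneg_left (abs_nonneg _) one_pos
          nlinarith
      _ = |EN χ N t| := div_one _
      _ ≤ 6 * B := hE
  calc |(t / (8 * π ^ 2)) * (TN χ N - 2 * π * Real.log N) - EN χ N t / (4 * π ^ 2)|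
      ≤ |(t / (8 * π ^ 2)) * (TN χ N - 2 * π * Real.log N)| + |EN χ N t / (4 * π ^ 2)| :=
        abs_sub _ _
    _ ≤ 89 * B + 50 := by linarith
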